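/- arXiv:1906.00902 — 3 statements merged into one kernel-verified Lean document; each statement's English description precedes it below -/
import Mathlib

section
/- Let B be the open unit disk in ℝ² and let U : cl B → ℝ² be a continuous mapping such that the restriction of U to ∂B is injective and such that for every P ∈ ∂B there exists a neighborhood G of P with U injective on G ∩ cl B. Then there exists ρ ∈ (0,1) such that U is injective on cl B \ B_ρ, where B_ρ is the open disk of radius ρ centered at the origin. -/
open Metric Set

noncomputable section

local notation "ℝ²" => EuclideanSpace ℝ (Fin 2)

/-!
Compactness of `∂B` upgrades injectivity on `∂B` plus local injectivity at its points to
injectivity on `t ∩ cl B` for an open `t ⊇ ∂B`: distinct points with equal images ever closer to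
`∂B` would accumulate either at a single point of `∂B` (contradicting local injectivity) or at two
distinct ones (contradicting injectivity on `∂B`). Again by compactness, `t` contains a uniform
thickening of `∂B`, hence an annulus `cl B \ B_ρ`.
-/

theorem Set.InjOn.exists_isOpen_superset_inter {X Y : Type*} [TopologicalSpace X]
    [TopologicalSpace Y] [T2Space Y] {f : X → Y} {K s : Set X} (inj : InjOn f s)
    (sc : IsCompact s) (hsK : s ⊆ K) (fc : ContinuousOn f K)
    (loc : ∀ x ∈ s, ∃ u ∈ nhds x, InjOn f (u ∩ K)) :
    ∃ t, IsOpen t ∧ s ⊆ t ∧ InjOn f (t ∩ K) := by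
  have inj' : InjOn (K.domRestrict f) (Subtype.val ⁻¹' s) :=
    fun x hx y hy h => Subtype.ext (inj hx hy h)
  have sc' : IsCompact (Subtype.val ⁻¹' s : Set K) := by
    rwa [Subtype.isCompact_iff, Subtype.image_preimage_coe, inter_eq_right.2 hsK]
  have fc' : ∀ x ∈ (Subtype.val ⁻¹' s : Set K), ContinuousAt (K.domRestrict f) x :=
    fun x _ => (continuousOn_iff_continuous_domRestrict.1 fc).continuousAt
  have loc' : ∀ x ∈ (Subtype.val ⁻¹' s : Set K), ∃ u ∈ nhds x, InjOn (K.domRestrict f) u := by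
    intro x hx
    obtain ⟨u, hu, hinj⟩ := loc x hx
    exact ⟨Subtype.val ⁻¹' u, continuous_subtype_val.continuousAt.preimage_mem_nhds hu,
      fun a ha b hb h => Subtype.ext (hinj ⟨ha, a.2⟩ ⟨hb, b.2⟩ h)⟩
  obtain ⟨_, hto', hst, htinj⟩ := inj'.exists_isOpen_superset sc' fc' loc'
  obtain ⟨t, hto, rfl⟩ := isOpen_induced_iff.1 hto'
  refine ⟨t, hto, fun x hx => hst (a := ⟨x, hsK hx⟩) hx, ?_⟩
  rintro x ⟨hxt, hxK⟩ y ⟨hyt, hyK⟩ h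
  exact congrArg Subtype.val (htinj (x₁ := ⟨x, hxK⟩) (x₂ := ⟨y, hyK⟩) hxt hyt h)

theorem exists_closedBall_diff_ball_subset_thickening_sphere {E : Type*}
    [NormedAddCommGroup E] [NormedSpace ℝ E] {δ : ℝ} (hδ : 0 < δ) :
    ∃ ρ, 0 < ρ ∧ ρ < 1 ∧ closedBall (0 : E) 1 \ ball 0 ρ ⊆ thickening δ (sphere 0 1) := by
  refine ⟨max (1 / 2) (1 - δ / 2), by positivity, max_lt (by norm_num) (by linarith), ?_⟩
  rintro x ⟨hx1, hxρ⟩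
  rw [mem_closedBall_zero_iff] at hx1
  rw [mem_ball_zero_iff, not_lt, max_le_iff] at hxρ
  have hx0 : ‖x‖ ≠ 0 := by linarith
  refine mem_thickening_iff.2 ⟨‖x‖⁻¹ • x, ?_, ?_⟩
  · rw [mem_sphere_zero_iff_norm, norm_smul, norm_inv, norm_norm, inv_mul_cancel₀ hx0]
  · have hproj : dist x (‖x‖⁻¹ • x) = 1 - ‖x‖ := by
      rw [dist_eq_norm, show x - ‖x‖⁻¹ • x = (1 - ‖x‖⁻¹) • x by rw [sub_smul, one_smul],
        norm_smul, Real.norm_of_nonpos (sub_nonpos.2 (one_le_inv₀ (by positivity) |>.2 hx1)), neg_sub,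
        sub_mul, inv_mul_cancel₀ hx0, one_mul]
    linarith

/-- **Lemma (topological).** A continuous map on the closed unit disk which is injective on
the boundary circle and a local homeomorphism at each boundary point is injective on some
closed annulus near the boundary. -/
theorem injective_on_annulus
    (U : ℝ² → ℝ²)
    (hUcont : ContinuousOn U (closedBall 0 1))
    (hUinj : InjOn U (sphere 0 1))
    (hloc : ∀ P ∈ sphere (0 : ℝ²) 1, ∃ G ∈ nhds P, InjOn U (G ∩ closedBall 0 1)) :
    ∃ ρ : ℝ, 0 < ρ ∧ ρ < 1 ∧ InjOn U (closedBall 0 1 \ ball 0 ρ) := by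
  obtain ⟨t, ht, hst, hinj⟩ := hUinj.exists_isOpen_superset_inter (isCompact_sphere 0 1)
    sphere_subset_closedBall hUcont hloc
  obtain ⟨δ, hδ, hδt⟩ := (isCompact_sphere (0 : ℝ²) 1).exists_thickening_subset_open ht hst
  obtain ⟨ρ, hρ0, hρ1, hannulus⟩ :=
    exists_closedBall_diff_ball_subset_thickening_sphere (E := ℝ²) hδ
  exact ⟨ρ, hρ0, hρ1, hinj.mono (subset_inter (hannulus.trans hδt) sdiff_subset)⟩
end
end

section
/- For every K ≥ 1 there exists a constant k ∈ [0,1), depending only on K, with the following property: if σ is a 2×2 real matrix satisfying σξ·ξ ≥ K⁻¹|ξ|² and σ⁻¹ξ·ξ ≥ K⁻¹|ξ|² for every ξ ∈ ℝ², then the complex numbers μ = (σ₂₂ − σ₁₁ − i(σ₁₂ + σ₂₁)) / (1 + Tr σ + det σ) and ν = (1 − det σ + i(σ₁₂ − σ₂₁)) / (1 + Tr σ + det σ) satisfy |μ| + |ν| ≤ k < 1. -/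
/-!
Write `T = tr σ`, `D = det σ`, `P = 1 + T + D`, and `A = ‖P μ‖`, `B = ‖P ν‖`. The symmetric part
of `σ` has eigenvalues `(T ± A) / 2` and that of `σ⁻¹ = D⁻¹ adj σ` has eigenvalues
`(T ± A) / (2D)`, so ellipticity gives `D > 0`, `K (T - A) ≥ 2` and `K (T - A) ≥ 2D`.
Since `B² + T² = A² + (1 + D)²` and `T > A`, we get `B ≤ 1 + D`, i.e. `A + B ≤ P - (T - A)`.
Finally `T² - A² ≤ 4D` bounds the larger eigenvalue `(T + A) / 2` by `K²(T - A) / 2`, whence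
`T - A ≥ 2P / (K + 1)²` and `|μ| + |ν| ≤ 1 - 2 / (K + 1)²`.
-/

open Matrix Complex

noncomputable section

/-- `μ` and `ν` of the statement are `muNumerator σ` and `nuNumerator σ` divided by
`1 + tr σ + det σ`. -/
def muNumerator (M : Matrix (Fin 2) (Fin 2) ℝ) : ℂ :=
  ↑(M 1 1) - ↑(M 0 0) - Complex.I * (↑(M 0 1) + ↑(M 1 0))

def nuNumerator (M : Matrix (Fin 2) (Fin 2) ℝ) : ℂ :=
  1 - ↑M.det + Complex.I * (↑(M 0 1) - ↑(M 1 0))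

lemma sq_norm_muNumerator (M : Matrix (Fin 2) (Fin 2) ℝ) :
    ‖muNumerator M‖ ^ 2 = (M 1 1 - M 0 0) ^ 2 + (M 0 1 + M 1 0) ^ 2 := by
  have : muNumerator M = ↑(M 1 1 - M 0 0) + ↑(-(M 0 1 + M 1 0)) * I := by
    rw [muNumerator]; push_cast; ring
  rw [this, Complex.sq_norm, normSq_add_mul_I, neg_sq]

lemma sq_norm_nuNumerator (M : Matrix (Fin 2) (Fin 2) ℝ) :
    ‖nuNumerator M‖ ^ 2 = (1 - M.det) ^ 2 + (M 0 1 - M 1 0) ^ 2 := by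
  have : nuNumerator M = ↑(1 - M.det) + ↑(M 0 1 - M 1 0) * I := by
    rw [nuNumerator]; push_cast; ring
  rw [this, Complex.sq_norm, normSq_add_mul_I]

lemma sq_trace_sub_sq_norm_muNumerator_le (M : Matrix (Fin 2) (Fin 2) ℝ) :
    M.trace ^ 2 - ‖muNumerator M‖ ^ 2 ≤ 4 * M.det := by
  rw [sq_norm_muNumerator, trace_fin_two, det_fin_two]
  nlinarith [sq_nonneg (M 0 1 - M 1 0)]

lemma sq_norm_nuNumerator_add_sq_trace (M : Matrix (Fin 2) (Fin 2) ℝ) :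
    ‖nuNumerator M‖ ^ 2 + M.trace ^ 2 = ‖muNumerator M‖ ^ 2 + (1 + M.det) ^ 2 := by
  rw [sq_norm_muNumerator, sq_norm_nuNumerator, trace_fin_two, det_fin_two]
  ring

lemma norm_nuNumerator_le (M : Matrix (Fin 2) (Fin 2) ℝ) (hM : ‖muNumerator M‖ ≤ M.trace)
    (hdet : 0 ≤ 1 + M.det) : ‖nuNumerator M‖ ≤ 1 + M.det := by
  rw [← sq_le_sq₀ (norm_nonneg _) hdet]
  nlinarith [sq_norm_nuNumerator_add_sq_trace M, norm_nonneg (muNumerator M)]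

lemma trace_inv_fin_two {𝕜 : Type*} [Field 𝕜] (M : Matrix (Fin 2) (Fin 2) 𝕜) :
    M⁻¹.trace = M.trace / M.det := by
  rw [Matrix.inv_def, Ring.inverse_eq_inv, adjugate_fin_two, trace_smul, trace_fin_two,
    trace_fin_two]
  simp [div_eq_inv_mul, add_comm]

lemma norm_muNumerator_inv (M : Matrix (Fin 2) (Fin 2) ℝ) :
    ‖muNumerator M⁻¹‖ = ‖muNumerator M‖ / |M.det| := by
  have : muNumerator M⁻¹ = -(M.det : ℂ)⁻¹ * muNumerator M := by
    rw [Matrix.inv_def, Ring.inverse_eq_inv, adjugate_fin_two, muNumerator, muNumerator]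
    simp only [Matrix.smul_apply, smul_eq_mul, of_apply, cons_val', cons_val_zero, cons_val_one,
      cons_val_fin_one]
    push_cast
    ring
  rw [this, norm_mul, norm_neg, norm_inv, Complex.norm_real, Real.norm_eq_abs, inv_mul_eq_div]

lemma norm_muNumerator_le_trace_sub {M : Matrix (Fin 2) (Fin 2) ℝ} {m : ℝ}
    (hM : ∀ ξ : Fin 2 → ℝ, m * (ξ ⬝ᵥ ξ) ≤ M *ᵥ ξ ⬝ᵥ ξ) :
    ‖muNumerator M‖ ≤ M.trace - 2 * m := by
  have hq : ∀ x y : ℝ,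
      m * (x * x + y * y) ≤ M 0 0 * (x * x) + (M 0 1 + M 1 0) * (x * y) + M 1 1 * (y * y) := by
    intro x y
    have := hM ![x, y]
    simp only [mulVec, dotProduct, Fin.sum_univ_two, cons_val_zero, cons_val_one,
      cons_val_fin_one] at this
    linarith
  have ha : m ≤ M 0 0 := by simpa using hq 1 0
  have hd : m ≤ M 1 1 := by simpa using hq 0 1
  have hdisc : (M 0 1 + M 1 0) ^ 2 ≤ 4 * (M 0 0 - m) * (M 1 1 - m) := by
    have := discrim_le_zero fun x => (by linarith [hq x 1] :
      0 ≤ (M 0 0 - m) * (x * x) + (M 0 1 + M 1 0) * x + (M 1 1 - m))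
    rw [discrim] at this
    linarith
  rw [← sq_le_sq₀ (norm_nonneg _) (by rw [trace_fin_two]; linarith), sq_norm_muNumerator,
    trace_fin_two]
  nlinarith

lemma ellipticity_bounds_fin_two {K : ℝ} (hK : 0 < K) {σ : Matrix (Fin 2) (Fin 2) ℝ}
    (hσ : ∀ ξ : Fin 2 → ℝ, K⁻¹ * (ξ ⬝ᵥ ξ) ≤ σ *ᵥ ξ ⬝ᵥ ξ)
    (hσinv : ∀ ξ : Fin 2 → ℝ, K⁻¹ * (ξ ⬝ᵥ ξ) ≤ σ⁻¹ *ᵥ ξ ⬝ᵥ ξ) :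
    0 < σ.det ∧ 2 ≤ K * (σ.trace - ‖muNumerator σ‖) ∧
      2 * σ.det ≤ K * (σ.trace - ‖muNumerator σ‖) := by
  have hA := norm_nonneg (muNumerator σ)
  have hKinv : 0 < K⁻¹ := inv_pos.2 hK
  have h := norm_muNumerator_le_trace_sub hσ
  have hinv := norm_muNumerator_le_trace_sub hσinv
  rw [trace_inv_fin_two, norm_muNumerator_inv] at hinv
  have hT : 0 < σ.trace := by linarith
  have hD : 0 < σ.det := by
    have : 0 < σ.trace / σ.det := by
      linarith [div_nonneg hA (abs_nonneg σ.det)]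
    exact (div_pos_iff_of_pos_left hT).1 this
  rw [abs_of_pos hD, div_le_iff₀ hD, sub_mul, div_mul_cancel₀ _ hD.ne'] at hinv
  refine ⟨hD, ?_, ?_⟩
  · calc 2 = K * (2 * K⁻¹) := by field_simp
      _ ≤ K * (σ.trace - ‖muNumerator σ‖) := by gcongr; linarith
  · calc 2 * σ.det = K * (2 * K⁻¹ * σ.det) := by field_simp
      _ ≤ K * (σ.trace - ‖muNumerator σ‖) := by gcongr; linarith

lemma two_mul_one_add_add_le {K T A D : ℝ} (hK : 0 < K) (hA : 0 ≤ A)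
    (h1 : 2 ≤ K * (T - A)) (h2 : 2 * D ≤ K * (T - A)) (h3 : T ^ 2 - A ^ 2 ≤ 4 * D) :
    2 * (1 + T + D) ≤ (K + 1) ^ 2 * (T - A) := by
  have hTA : 0 ≤ T + A := by nlinarith
  have : 2 * (T + A) ≤ 2 * (K ^ 2 * (T - A)) :=
    calc 2 * (T + A) ≤ K * (T - A) * (T + A) := mul_le_mul_of_nonneg_right h1 hTA
      _ = K * (T ^ 2 - A ^ 2) := by ring
      _ ≤ K * (4 * D) := by gcongr
      _ = 2 * K * (2 * D) := by ring
      _ ≤ 2 * K * (K * (T - A)) := by gcongr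
      _ = 2 * (K ^ 2 * (T - A)) := by ring
  nlinarith

/-- **Ellipticity of the complex dilatations.** For every `K ≥ 1` there is `k ∈ [0,1)`,
depending only on `K`, such that for every `K`-elliptic `2×2` matrix `σ` the complex
dilatations `μ`, `ν` satisfy `|μ| + |ν| ≤ k < 1`. -/
theorem complex_dilatations_bound (K : ℝ) (hK : 1 ≤ K) :
    ∃ k : ℝ, 0 ≤ k ∧ k < 1 ∧
      ∀ σ : Matrix (Fin 2) (Fin 2) ℝ,
        (∀ ξ : Fin 2 → ℝ, K⁻¹ * (ξ ⬝ᵥ ξ) ≤ σ.mulVec ξ ⬝ᵥ ξ ∧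
          K⁻¹ * (ξ ⬝ᵥ ξ) ≤ σ⁻¹.mulVec ξ ⬝ᵥ ξ) →
        Norm.norm ((↑(σ 1 1) - ↑(σ 0 0) - Complex.I * (↑(σ 0 1) + ↑(σ 1 0))) /
            (1 + ↑σ.trace + ↑σ.det)) +
          Norm.norm ((1 - ↑σ.det + Complex.I * (↑(σ 0 1) - ↑(σ 1 0))) /
            (1 + ↑σ.trace + ↑σ.det)) ≤ k := by
  have hK4 : 4 ≤ (K + 1) ^ 2 := by nlinarith
  refine ⟨1 - 2 / (K + 1) ^ 2, ?_, sub_lt_self _ (by positivity), fun σ hσ => ?_⟩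
  · rw [sub_nonneg, div_le_one (by positivity)]
    linarith
  obtain ⟨hD, h1, h2⟩ :=
    ellipticity_bounds_fin_two (by linarith) (fun ξ => (hσ ξ).1) (fun ξ => (hσ ξ).2)
  have hA := norm_nonneg (muNumerator σ)
  have hAT : ‖muNumerator σ‖ < σ.trace := by nlinarith
  have hP : 0 < 1 + σ.trace + σ.det := by linarith
  have hgap : 2 / (K + 1) ^ 2 * (1 + σ.trace + σ.det) ≤ σ.trace - ‖muNumerator σ‖ := by
    rw [div_mul_eq_mul_div, div_le_iff₀ (by positivity)]
    linarith [two_mul_one_add_add_le (by linarith) hA h1 h2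
      (sq_trace_sub_sq_norm_muNumerator_le σ)]
  have hden : (1 + ↑σ.trace + ↑σ.det : ℂ) = ↑(1 + σ.trace + σ.det) := by push_cast; rfl
  change ‖muNumerator σ / _‖ + ‖nuNumerator σ / _‖ ≤ _
  rw [hden, norm_div, norm_div, Complex.norm_real, Real.norm_of_nonneg hP.le, ← add_div,
    div_le_iff₀ hP, sub_mul, one_mul]
  linarith [norm_nuNumerator_le σ hAT.le (by linarith)]

end
end

section
/- Let σ be a 2×2 real matrix satisfying σξ·ξ ≥ K⁻¹|ξ|² and σ⁻¹ξ·ξ ≥ K⁻¹|ξ|² for every ξ ∈ ℝ² (K ≥ 1), let p ∈ ℝ², and set q = Jσp where J = ((0,-1),(1,0)). Define the complex numbers f_z = ½((p₁ + i q₁) − i(p₂ + i q₂)) and f_z̄ = ½((p₁ + i q₁) + i(p₂ + i q₂)) (i.e. the complex derivatives of f = u + iv at a point where ∇u = p and ∇v = q). Then f_z̄ = μ f_z + ν conj(f_z), where μ = (σ₂₂ − σ₁₁ − i(σ₁₂ + σ₂₁)) / (1 + Tr σ + det σ) and ν = (1 − det σ + i(σ₁₂ − σ₂₁)) / (1 +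 Tr σ + det σ). -/
open Matrix Complex

noncomputable section

/-- **The Beltrami equation at the algebraic level.** If `q = Jσp`, then the complex
derivatives `f_z`, `f_z̄` built from `p = ∇u` and `q = ∇v` satisfy
`f_z̄ = μ f_z + ν conj(f_z)`, with `μ`, `ν` the complex dilatations of `σ`. -/
theorem beltrami_identity
    (K : ℝ) (hK : 1 ≤ K)
    (σ : Matrix (Fin 2) (Fin 2) ℝ)
    (hell : ∀ ξ : Fin 2 → ℝ, K⁻¹ * (ξ ⬝ᵥ ξ) ≤ σ.mulVec ξ ⬝ᵥ ξ ∧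
      K⁻¹ * (ξ ⬝ᵥ ξ) ≤ σ⁻¹.mulVec ξ ⬝ᵥ ξ)
    (p q : Fin 2 → ℝ)
    (hq : q = (!![0, -1; 1, 0] : Matrix (Fin 2) (Fin 2) ℝ).mulVec (σ.mulVec p))
    (fz fzbar μ ν : ℂ)
    (hfz : fz = (1 / 2 : ℂ) * ((↑(p 0) + Complex.I * ↑(q 0)) -
      Complex.I * (↑(p 1) + Complex.I * ↑(q 1))))
    (hfzbar : fzbar = (1 / 2 : ℂ) * ((↑(p 0) + Complex.I * ↑(q 0)) +
      Complex.I * (↑(p 1) + Complex.I * ↑(q 1))))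
    (hμ : μ = (↑(σ 1 1) - ↑(σ 0 0) - Complex.I * (↑(σ 0 1) + ↑(σ 1 0))) /
      (1 + ↑σ.trace + ↑σ.det))
    (hν : ν = (1 - ↑σ.det + Complex.I * (↑(σ 0 1) - ↑(σ 1 0))) /
      (1 + ↑σ.trace + ↑σ.det)) :
    fzbar = μ * fz + ν * starRingEnd ℂ fz := by
  set a := σ 0 0 with ha
  set b := σ 0 1 with hb
  set c := σ 1 0 with hc
  set d := σ 1 1 with hd
  have hKpos : (0:ℝ) < K⁻¹ := inv_pos.mpr (lt_of_lt_of_le one_pos hK)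
  have h1 := (hell ![1, 0]).1
  have h2 := (hell ![0, 1]).1
  have h3 := (hell ![-(b+c), 2*a]).1
  simp only [Matrix.mulVec, dotProduct, Fin.sum_univ_two, Matrix.cons_val_zero,
    Matrix.cons_val_one, Matrix.head_cons] at h1 h2 h3
  have hapos : 0 < a := by nlinarith
  have hdpos : 0 < d := by nlinarith
  have hDpos : 0 < 1 + (a + d) + (a * d - b * c) := by
    nlinarith [sq_nonneg (b - c), sq_nonneg (b + c), mul_pos hapos hdpos]
  have hD : ((1 : ℂ) + ↑σ.trace + ↑σ.det) ≠ 0 := by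
    rw [Matrix.trace_fin_two, Matrix.det_fin_two]
    intro h
    apply ne_of_gt hDpos
    have := congrArg Complex.re h
    push_cast at this
    simpa [← ha, ← hb, ← hc, ← hd] using this
  have hq0 : q 0 = -(c * p 0 + d * p 1) := by
    rw [hq]
    simp [Matrix.mulVec, dotProduct, Fin.sum_univ_two, ← ha, ← hb, ← hc, ← hd]
  have hq1 : q 1 = a * p 0 + b * p 1 := by
    rw [hq]
    simp [Matrix.mulVec, dotProduct, Fin.sum_univ_two, ← ha, ← hb, ← hc, ← hd]
  have hconj : starRingEnd ℂ fz = (1 / 2 : ℂ) * ((↑(p 0) - Complex.I * ↑(q 0)) +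
      Complex.I * (↑(p 1) - Complex.I * ↑(q 1))) := by
    rw [hfz]
    simp only [_root_.map_mul, map_add, map_sub, _root_.map_one, map_div₀, map_ofNat,
      Complex.conj_ofReal, Complex.conj_I]
    ring
  rw [hμ, hν, div_mul_eq_mul_div, div_mul_eq_mul_div, ← add_div, eq_div_iff hD]
  rw [hfzbar, hconj, hfz, hq0, hq1, Matrix.trace_fin_two, Matrix.det_fin_two]
  simp only [← ha, ← hb, ← hc, ← hd]
  push_cast
  apply Complex.ext <;>
    simp only [Complex.add_re, Complex.add_im, Complex.sub_re, Complex.sub_im,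
      Complex.mul_re, Complex.mul_im, Complex.one_re, Complex.one_im, Complex.I_re, Complex.I_im,
      Complex.ofReal_re, Complex.ofReal_im, Complex.neg_re, Complex.neg_im,
      Complex.div_ofNat_re, Complex.div_ofNat_im] <;>
    ring
end
end
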